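/- The AB-Lemma: Let S = (P, M, I) be a finite incidence structure of order (s,t) with t odd, and let A and B be subgroups of the automorphism group of S such that (1) B is normal in A, (2) A and B have the same orbits on P, and (3) each A-orbit on M splits into exactly two B-orbits. Then for every choice function selecting one B-orbit inside each A-orbit on M, the union of the selected B-orbits is a hemisystem of S; in particular there exist 2^m hemisystems admitting B, where m is the number of A-orbits on M. -/

import Mathlib

/-- The orbit of a point `p ∈ P` under a subgroup `S` of the group of pairs of
permutations (of points and maximals), acting via the first component. -/
def orbP {P M : Type*} (S : Subgroup (Equiv.Perm P × Equiv.Perm M)) (p : P) : Set P :=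
  {p' | ∃ g ∈ S, g.1 p = p'}

/-- The orbit of a maximal `m ∈ M` under a subgroup `S` of the group of pairs of
permutations (of points and maximals), acting via the second component. -/
def orbM {P M : Type*} (S : Subgroup (Equiv.Perm P × Equiv.Perm M)) (m : M) : Set M :=
  {m' | ∃ g ∈ S, g.2 m = m'}

namespace ABAux

variable {P M : Type*} {S A B : Subgroup (Equiv.Perm P × Equiv.Perm M)}

theorem mem_orbM_self (S : Subgroup (Equiv.Perm P × Equiv.Perm M)) (m : M) : m ∈ orbM S m :=
  ⟨1, S.one_mem, rfl⟩

theorem orbM_symm {m m' : M} (h : m' ∈ orbM S m) : m ∈ orbM S m' := by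
  obtain ⟨g, hg, rfl⟩ := h
  exact ⟨g⁻¹, S.inv_mem hg, by simp⟩

theorem orbM_subset {m m' : M} (h : m' ∈ orbM S m) : orbM S m' ⊆ orbM S m := by
  obtain ⟨g, hg, rfl⟩ := h
  rintro x ⟨g', hg', rfl⟩
  exact ⟨g' * g, S.mul_mem hg' hg, by simp [Prod.snd_mul]⟩

theorem orbM_eq {m m' : M} (h : m' ∈ orbM S m) : orbM S m' = orbM S m :=
  le_antisymm (orbM_subset h) (orbM_subset (orbM_symm h))

theorem conj_mem (hnormal : ∀ a ∈ A, ∀ b ∈ B, a * b * a⁻¹ ∈ B)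
    {a : Equiv.Perm P × Equiv.Perm M} (ha : a ∈ A) {m x : M} (hx : x ∈ orbM B m) :
    a.2 x ∈ orbM B (a.2 m) := by
  obtain ⟨b, hb, rfl⟩ := hx
  exact ⟨a * b * a⁻¹, hnormal a ha b hb, by simp [Prod.snd_mul]⟩

theorem conj_iff (hnormal : ∀ a ∈ A, ∀ b ∈ B, a * b * a⁻¹ ∈ B)
    {a : Equiv.Perm P × Equiv.Perm M} (ha : a ∈ A) {m x : M} :
    x ∈ orbM B m ↔ a.2 x ∈ orbM B (a.2 m) := by
  refine ⟨conj_mem hnormal ha, fun h => ?_⟩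
  have := conj_mem hnormal (A.inv_mem ha) h
  simpa using this

open Classical in
noncomputable def cnt [Fintype M] (I : P → M → Prop)
    (B : Subgroup (Equiv.Perm P × Equiv.Perm M)) (p : P) (m : M) : ℕ :=
  (Finset.univ.filter fun m' => m' ∈ orbM B m ∧ I p m').card

theorem filter_card_congr {α : Type*} {s : Finset α} {p q : α → Prop}
    [DecidablePred p] [DecidablePred q] (h : ∀ x, p x ↔ q x) :
    (s.filter p).card = (s.filter q).card := by
  rw [Finset.filter_congr fun x _ => h x]

theorem cnt_congr [Fintype M] {I : P → M → Prop} {m m' : M}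
    (h : orbM B m = orbM B m') (p : P) : cnt I B p m = cnt I B p m' := by
  classical
  unfold cnt
  exact filter_card_congr fun x => by rw [h]

theorem cnt_smul [Fintype M] {I : P → M → Prop}
    (hAaut : ∀ g ∈ A, ∀ (p : P) (m : M), I p m ↔ I (g.1 p) (g.2 m))
    (hnormal : ∀ a ∈ A, ∀ b ∈ B, a * b * a⁻¹ ∈ B)
    {a : Equiv.Perm P × Equiv.Perm M} (ha : a ∈ A) (p : P) (m : M) :
    cnt I B p m = cnt I B (a.1 p) (a.2 m) := by
  classical
  unfold cnt
  refine Finset.card_bij' (fun m' _ => a.2 m') (fun m' _ => a⁻¹.2 m') ?_ ?_ ?_ ?_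
  · intro x hx
    simp only [Finset.mem_filter, Finset.mem_univ, true_and] at hx ⊢
    exact ⟨conj_mem hnormal ha hx.1, (hAaut a ha p x).mp hx.2⟩
  · intro x hx
    simp only [Finset.mem_filter, Finset.mem_univ, true_and] at hx ⊢
    constructor
    · have := conj_mem hnormal (A.inv_mem ha) hx.1
      simpa using this
    · have := (hAaut a ha p (a⁻¹.2 x)).mpr
      simp only [Prod.snd_inv, Equiv.Perm.inv_def, Equiv.apply_symm_apply] at this
      exact this hx.2
  · intro x _; simp
  · intro x _; simp

theorem cnt_eq_of_orbA [Fintype M] {I : P → M → Prop}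
    (hAaut : ∀ g ∈ A, ∀ (p : P) (m : M), I p m ↔ I (g.1 p) (g.2 m))
    (hBA : B ≤ A)
    (hnormal : ∀ a ∈ A, ∀ b ∈ B, a * b * a⁻¹ ∈ B)
    (hsameP : ∀ p : P, orbP A p = orbP B p)
    {m₁ m₂ : M} (h : m₂ ∈ orbM A m₁) (p : P) :
    cnt I B p m₁ = cnt I B p m₂ := by
  obtain ⟨a, ha, ham⟩ := h
  have h1 : cnt I B p m₁ = cnt I B (a.1 p) m₂ := by
    have := cnt_smul (B := B) hAaut hnormal ha p m₁
    rwa [ham] at this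
  have hap : a.1 p ∈ orbP B p := by
    rw [← hsameP p]; exact ⟨a, ha, rfl⟩
  obtain ⟨b, hb, hbp⟩ := hap
  have h2 : cnt I B (a.1 p) m₂ = cnt I B p ((b⁻¹).2 m₂) := by
    have := cnt_smul (B := B) hAaut hnormal (A.inv_mem (hBA hb)) (a.1 p) m₂
    have hp : (b⁻¹).1 (a.1 p) = p := by rw [← hbp]; simp
    rwa [hp] at this
  have h3 : cnt I B p ((b⁻¹).2 m₂) = cnt I B p m₂ :=
    cnt_congr (orbM_eq ⟨b⁻¹, B.inv_mem hb, rfl⟩) p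
  omega

end ABAux

/-- The AB-Lemma: Let S = (P, M, I) be a finite incidence structure of
order (s,t) with t odd, and let A and B be groups of automorphisms of S with B ⊴ A,
A and B having the same orbits on points, and each A-orbit on maximals splitting into
exactly two B-orbits.  Then every set of maximals obtained by choosing exactly one
B-orbit inside each A-orbit on maximals is a hemisystem admitting B; in particular
there are at least 2^m hemisystems admitting B, where m is the number of A-orbits
on the maximals. -/
theorem AB_lemma
    {P M : Type*} [Fintype P] [Fintype M] [DecidableEq M]
    (I : P → M → Prop) [∀ p m, Decidable (I p m)]
    (s t : ℕ) (ht : Odd t)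
    (horder₁ : ∀ m : M, (Finset.univ.filter (fun p => I p m)).card = s + 1)
    (horder₂ : ∀ p : P, (Finset.univ.filter (fun m => I p m)).card = t + 1)
    (A B : Subgroup (Equiv.Perm P × Equiv.Perm M))
    (hAaut : ∀ g ∈ A, ∀ (p : P) (m : M), I p m ↔ I (g.1 p) (g.2 m))
    (hBA : B ≤ A)
    (hnormal : ∀ a ∈ A, ∀ b ∈ B, a * b * a⁻¹ ∈ B)
    (hsameP : ∀ p : P, orbP A p = orbP B p)
    (hsplit : ∀ m : M, ∃ m₁ m₂ : M,
        orbM B m₁ ≠ orbM B m₂ ∧ orbM A m = orbM B m₁ ∪ orbM B m₂) :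
    (∀ H : Finset M,
        (∀ m : M, ∃ m' : M, m' ∈ orbM A m ∧ (↑H : Set M) ∩ orbM A m = orbM B m') →
        ((∀ p : P, (H.filter (fun m => I p m)).card = (t + 1) / 2) ∧
          ∀ g ∈ B, ∀ m ∈ H, g.2 m ∈ H)) ∧
      2 ^ (Set.ncard {O : Set M | ∃ m : M, O = orbM A m}) ≤
        Set.ncard {H : Finset M |
          (∀ p : P, (H.filter (fun m => I p m)).card = (t + 1) / 2) ∧
          ∀ g ∈ B, ∀ m ∈ H, g.2 m ∈ H} := by
  classical
  open ABAux in
  have hBsub : ∀ m : M, orbM B m ⊆ orbM A m := by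
    rintro m x ⟨g, hg, rfl⟩; exact ⟨g, hBA hg, rfl⟩
  have main : ∀ H : Finset M,
      (∀ m : M, ∃ m' : M, m' ∈ orbM A m ∧ (↑H : Set M) ∩ orbM A m = orbM B m') →
      ((∀ p : P, (H.filter (fun m => I p m)).card = (t + 1) / 2) ∧
        ∀ g ∈ B, ∀ m ∈ H, g.2 m ∈ H) := by
    intro H hH
    constructor
    · intro p
      set t' : Finset (Set M) := Finset.univ.image (fun m : M => orbM A m) with ht'
      have hc1 : (Finset.univ.filter fun m => I p m).card
          = ∑ O ∈ t', ((Finset.univ.filter fun m => I p m).filter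
              fun m => orbM A m = O).card :=
        Finset.card_eq_sum_card_fiberwise (fun x _ =>
          Finset.mem_image_of_mem _ (Finset.mem_univ x))
      have hc2 : (H.filter fun m => I p m).card
          = ∑ O ∈ t', ((H.filter fun m => I p m).filter
              fun m => orbM A m = O).card :=
        Finset.card_eq_sum_card_fiberwise (fun x _ =>
          Finset.mem_image_of_mem _ (Finset.mem_univ x))
      have key : ∀ O ∈ t',
          ((Finset.univ.filter fun m => I p m).filter fun m => orbM A m = O).card
            = 2 * ((H.filter fun m => I p m).filter fun m => orbM A m = O).card := by
        intro O hO
        obtain ⟨m₀, -, rfl⟩ := Finset.mem_image.1 hO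
        obtain ⟨m', hm'A, hm'⟩ := hH m₀
        obtain ⟨m₁, m₂, hne, hsp⟩ := hsplit m₀
        have horb : ∀ x : M, orbM A x = orbM A m₀ ↔ x ∈ orbM A m₀ := fun x =>
          ⟨fun h => h ▸ mem_orbM_self A x, fun h => orbM_eq h⟩
        -- the H-fiber equals the count of the selected B-orbit
        have hHf : ((H.filter fun m => I p m).filter fun m => orbM A m = orbM A m₀)
            = Finset.univ.filter fun m => m ∈ orbM B m' ∧ I p m := by
          ext x
          simp only [Finset.mem_filter, Finset.mem_univ, true_and, horb]
          have hx := Set.ext_iff.1 hm' x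
          simp only [Set.mem_inter_iff, Finset.mem_coe] at hx
          constructor
          · rintro ⟨⟨hxH, hxI⟩, hxO⟩
            exact ⟨hx.1 ⟨hxH, hxO⟩, hxI⟩
          · rintro ⟨hxB, hxI⟩
            obtain ⟨hxH, hxO⟩ := hx.2 hxB
            exact ⟨⟨hxH, hxI⟩, hxO⟩
        -- the full fiber is the disjoint union of the two B-orbit counts
        have hFf : ((Finset.univ.filter fun m => I p m).filter fun m => orbM A m = orbM A m₀)
            = (Finset.univ.filter fun m => m ∈ orbM B m₁ ∧ I p m)
              ∪ (Finset.univ.filter fun m => m ∈ orbM B m₂ ∧ I p m) := by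
          ext x
          simp only [Finset.mem_filter, Finset.mem_univ, true_and, horb,
            Finset.mem_union]
          rw [hsp]
          simp only [Set.mem_union]
          tauto
        have hdisj : Disjoint (Finset.univ.filter fun m => m ∈ orbM B m₁ ∧ I p m)
            (Finset.univ.filter fun m => m ∈ orbM B m₂ ∧ I p m) := by
          rw [Finset.disjoint_left]
          intro x h1 h2
          simp only [Finset.mem_filter, Finset.mem_univ, true_and] at h1 h2
          exact hne ((orbM_eq h1.1).symm.trans (orbM_eq h2.1))
        have h12 : m₂ ∈ orbM A m₁ := by
          have hm₁ : m₁ ∈ orbM A m₀ := hsp ▸ Or.inl (mem_orbM_self B m₁)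
          have hm₂ : m₂ ∈ orbM A m₀ := hsp ▸ Or.inr (mem_orbM_self B m₂)
          rw [orbM_eq hm₁]; exact hm₂
        have hcnt12 : cnt I B p m₁ = cnt I B p m₂ :=
          cnt_eq_of_orbA hAaut hBA hnormal hsameP h12 p
        have hm'or : orbM B m' = orbM B m₁ ∨ orbM B m' = orbM B m₂ := by
          have : m' ∈ orbM B m₁ ∪ orbM B m₂ := hsp ▸ hm'A
          exact this.imp (fun h => orbM_eq h) (fun h => orbM_eq h)
        have hcnt' : cnt I B p m' = cnt I B p m₁ := by
          rcases hm'or with h | h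
          · exact cnt_congr h p
          · exact (cnt_congr h p).trans hcnt12.symm
        rw [hHf, hFf, Finset.card_union_of_disjoint hdisj]
        have e1 : (Finset.univ.filter fun m => m ∈ orbM B m₁ ∧ I p m).card = cnt I B p m₁ := by
          unfold cnt; congr
        have e2 : (Finset.univ.filter fun m => m ∈ orbM B m₂ ∧ I p m).card = cnt I B p m₂ := by
          unfold cnt; congr
        have e3 : (Finset.univ.filter fun m => m ∈ orbM B m' ∧ I p m).card = cnt I B p m' := by
          unfold cnt; congr
        rw [e1, e2, e3]
        omega
      have : t + 1 = 2 * (H.filter fun m => I p m).card := by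
        rw [← horder₂ p, hc1, hc2, Finset.mul_sum]
        exact Finset.sum_congr rfl key
      omega
    · intro g hg m hm
      obtain ⟨m', hm'A, hm'⟩ := hH m
      have hmB : m ∈ orbM B m' := by
        rw [← hm']; exact ⟨hm, mem_orbM_self A m⟩
      have : g.2 m ∈ orbM B m' := by
        rw [← orbM_eq hmB]
        exact ⟨g, hg, rfl⟩
      have : g.2 m ∈ (↑H : Set M) ∩ orbM A m := hm' ▸ this
      exact this.1
  refine ⟨main, ?_⟩
  set 𝒪 : Set (Set M) := {O : Set M | ∃ m : M, O = orbM A m} with h𝒪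
  have hrep : ∀ O : ↥𝒪, ∃ m : M, (O : Set M) = orbM A m := fun O => O.2
  choose rep hrep using hrep
  choose m1 m2 hne12 hsp using fun O : ↥𝒪 => hsplit (rep O)
  have oAmem : ∀ m : M, orbM A m ∈ 𝒪 := fun m => ⟨m, rfl⟩
  set oA : M → ↥𝒪 := fun m => ⟨orbM A m, oAmem m⟩ with hoA
  set sel : (↥𝒪 → Bool) → ↥𝒪 → M := fun f O => if f O then m1 O else m2 O with hsel
  have hselA : ∀ f O, sel f O ∈ orbM A (rep O) := by
    intro f O
    rw [hsp O]
    by_cases h : f O <;>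
      simp [hsel, h, Set.mem_union, mem_orbM_self]
  have oA_coe : ∀ m : M, ((oA m : ↥𝒪) : Set M) = orbM A m := fun m => rfl
  have oA_eq : ∀ {x m : M}, x ∈ orbM A m → oA x = oA m := fun hx =>
    Subtype.ext (orbM_eq hx)
  have hselA' : ∀ f (m : M), sel f (oA m) ∈ orbM A m := by
    intro f m
    have h1 := hselA f (oA m)
    have h2 : orbM A (rep (oA m)) = orbM A m := ((hrep (oA m)).symm : _)
    rwa [h2] at h1
  have oA_sel : ∀ f O, oA (sel f O) = O := by
    intro f O
    refine Subtype.ext ?_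
    have := orbM_eq (hselA f O)
    rw [oA_coe, this, ← hrep O]
  set Hf : (↥𝒪 → Bool) → Finset M :=
    fun f => Finset.univ.filter (fun m => m ∈ orbM B (sel f (oA m))) with hHf
  have memHf : ∀ f (m : M), m ∈ Hf f ↔ m ∈ orbM B (sel f (oA m)) := by
    intro f m; simp [hHf]
  have hsel_prop : ∀ f, ∀ m : M, ∃ m' : M, m' ∈ orbM A m ∧
      (↑(Hf f) : Set M) ∩ orbM A m = orbM B m' := by
    intro f m
    refine ⟨sel f (oA m), hselA' f m, ?_⟩
    ext x
    simp only [Set.mem_inter_iff, Finset.mem_coe, memHf]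
    constructor
    · rintro ⟨hx1, hx2⟩
      rwa [oA_eq hx2] at hx1
    · intro hx
      have hxA : x ∈ orbM A m := by
        have h1 : x ∈ orbM A (sel f (oA m)) := hBsub _ hx
        rwa [orbM_eq (hselA' f m)] at h1
      exact ⟨by rwa [oA_eq hxA], hxA⟩
  have hself : ∀ f O, sel f O ∈ Hf f := by
    intro f O
    rw [memHf, oA_sel]
    exact mem_orbM_self B _
  have hinj : Function.Injective Hf := by
    intro f g hfg
    funext O
    by_contra hO
    have h1 : sel f O ∈ Hf g := hfg ▸ hself f O
    rw [memHf, oA_sel] at h1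
    have horb : orbM B (sel f O) = orbM B (sel g O) := orbM_eq h1
    rcases Bool.eq_false_or_eq_true (f O) with hf | hf <;>
      rcases Bool.eq_false_or_eq_true (g O) with hg | hg
    · exact hO (hf.trans hg.symm)
    · apply hne12 O
      simp only [hsel, hf, hg, if_true, if_false, Bool.false_eq_true] at horb
      exact horb
    · apply hne12 O
      simp only [hsel, hf, hg, if_true, if_false, Bool.false_eq_true] at horb
      exact horb.symm
    · exact hO (hf.trans hg.symm)
  -- cardinality bookkeeping
  have hfin𝒪 : 𝒪.Finite := Set.toFinite _
  set ℋ : Set (Finset M) := {H : Finset M |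
      (∀ p : P, (H.filter (fun m => I p m)).card = (t + 1) / 2) ∧
      ∀ g ∈ B, ∀ m ∈ H, g.2 m ∈ H} with hℋ
  have hfinℋ : ℋ.Finite := Set.toFinite _
  haveI : Finite ↥𝒪 := hfin𝒪.to_subtype
  haveI : Finite ↥ℋ := hfinℋ.to_subtype
  have hΦ : Function.Injective (fun f : ↥𝒪 → Bool =>
      (⟨Hf f, main (Hf f) (hsel_prop f)⟩ : ↥ℋ)) := by
    intro f g h
    exact hinj (congrArg Subtype.val h)
  have hle : Nat.card (↥𝒪 → Bool) ≤ Nat.card ↥ℋ :=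
    Nat.card_le_card_of_injective _ hΦ
  have hcard1 : Nat.card (↥𝒪 → Bool) = 2 ^ 𝒪.ncard := by
    rw [Nat.card_fun, Nat.card_coe_set_eq]
    norm_num [Nat.card_eq_fintype_card]
  calc 2 ^ 𝒪.ncard = Nat.card (↥𝒪 → Bool) := hcard1.symm
    _ ≤ Nat.card ↥ℋ := hle
    _ = ℋ.ncard := Nat.card_coe_set_eq ℋ
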